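/- arXiv:2006.12491 — 2 statements merged into one kernel-verified Lean document; each statement's English description precedes it below -/
import Mathlib

section
/- Let A be an n×n real matrix whose characteristic polynomial (over ℂ) has roots λ₁, λ₂, …, λ_n counted with multiplicity, where λ₁ is real and is associated with a real eigenvector v having no zero components. Let D = diag(v) and B = D^{-1} A D. Then for every i ∈ {2, 3, …, n} (the λ_i for i ≥ 2 being the roots, with multiplicity, of charpoly(A)/(X − λ₁)), every p ∈ ℕ ∪ {∞} with p ≥ 1, and every positive integer k: |λ_i| ≤ (τ_p(B^k))^{1/k}. -/
open Matrix
open scoped ENNReal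

/-- Non-increasing (descending) sort of a list of reals. -/
noncomputable def sortDesc (l : List ℝ) : List ℝ := (l.insertionSort (· ≤ ·)).reverse

/-- Given the descending rearrangement `l` of `n` numbers, the sum of the largest
(about) half minus the sum of the smallest (about) half, skipping the middle
element when `n` is odd. -/
noncomputable def halfSumDiff (n : ℕ) (l : List ℝ) : ℝ :=
  if n % 2 = 1 then (l.take ((n - 1) / 2)).sum - (l.drop ((n + 1) / 2)).sum
  else (l.take (n / 2)).sum - (l.drop (n / 2)).sum

/-- Radius of the `i`-th Gershgorin disc of the second type of `M`, computed from
the `i`-th row of `M` with the diagonal entry replaced by `0`. -/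
noncomputable def secondTypeRadius {n : ℕ} (M : Matrix (Fin n) (Fin n) ℝ) (i : Fin n) : ℝ :=
  halfSumDiff n (sortDesc (List.ofFn fun j : Fin n => if j = i then 0 else M i j))

/-- The `i`-th Gershgorin disc of the second type of `M`. -/
noncomputable def secondTypeDisc {n : ℕ} (M : Matrix (Fin n) (Fin n) ℝ) (i : Fin n) : Set ℂ :=
  Metric.closedBall ((M i i : ℝ) : ℂ) (secondTypeRadius M i)

/-- The Gershgorin region of the second type of `M`. -/
noncomputable def secondTypeRegion {n : ℕ} (M : Matrix (Fin n) (Fin n) ℝ) : Set ℂ :=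
  ⋃ i : Fin n, secondTypeDisc M i

/-- `μ` is a (complex) eigenvalue of the real matrix `A`, i.e. a complex root of
its characteristic polynomial. -/
def IsEigenvalueC {n : ℕ} (A : Matrix (Fin n) (Fin n) ℝ) (μ : ℂ) : Prop :=
  ((A.map ((↑) : ℝ → ℂ)).charpoly).IsRoot μ

/-- The `k`-th largest element (1-indexed) among the `n - 1` off-diagonal entries of
column `j` of `B`. -/
noncomputable def kthLargestOffDiag {n : ℕ} (B : Matrix (Fin n) (Fin n) ℝ) (j : Fin n)
    (k : ℕ) : ℝ :=
  (sortDesc (((List.ofFn fun i : Fin n => B i j).eraseIdx j.val))).getD (k - 1) 0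

/-- The ℓ_p norm of a vector in ℝ^n. -/
noncomputable def lpNorm {n : ℕ} (p : ℝ≥0∞) (x : Fin n → ℝ) : ℝ :=
  @norm (PiLp p fun _ : Fin n => ℝ) _ ((WithLp.equiv p (∀ _ : Fin n, ℝ)).symm x)

/-- The seminorm-like quantity `τ_p(B)`: the supremum of `‖Bᵀ x‖_p` over all real
vectors `x` with `xᵀ e = 0` and `‖x‖_p = 1`. -/
noncomputable def tau {n : ℕ} (p : ℝ≥0∞) (B : Matrix (Fin n) (Fin n) ℝ) : ℝ :=
  sSup { t : ℝ | ∃ x : Fin n → ℝ, (∑ i, x i) = 0 ∧ lpNorm p x = 1 ∧ t = lpNorm p (Bᵀ *ᵥ x) }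

/-- The Ostrowski–Brauer set `Γ(M)` of a real square matrix `M`. -/
noncomputable def brauerSet {n : ℕ} (M : Matrix (Fin n) (Fin n) ℝ) : Set ℂ :=
  ⋃ (i : Fin n) (j : Fin n) (_ : i < j),
    { y : ℂ | ‖y - (M i i : ℝ)‖ * ‖y - (M j j : ℝ)‖ ≤
        (∑ k ∈ Finset.univ.filter fun k => k ≠ i, |M i k|) *
        (∑ k ∈ Finset.univ.filter fun k => k ≠ j, |M j k|) }

/-- `cs_j(A)` from Definition 2.3: sorted column sums difference. -/
noncomputable def csCol {n : ℕ} (A : Matrix (Fin n) (Fin n) ℝ) (j : Fin n) : ℝ :=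
  halfSumDiff n (sortDesc (List.ofFn fun i : Fin n => A i j))

/-!
Conjugating by `D = diag v` turns `v` into the all-ones vector `e`, so `B e = λ₁ e` and `B` has
the characteristic polynomial of `A`. In a basis whose first vector is `e`, `B` is block
triangular with `λ₁` in the corner, so the remaining roots `λᵢ` are eigenvalues of the other
block; a left eigenvector of that block, padded with a zero, pulls back to a complex vector `z`
with `zᵀ B = λᵢ zᵀ` and `zᵀ e = 0`.
If `Bᵀ z = c z` with `zᵀ e = 0`, the real vectors `w(u) = Re (u z)`, `u` on the unit circle,
satisfy `wᵀ e = 0` and `Bᵀ w(u) = |c| w(u e^{i arg c})`; comparing at a `u` maximising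
`‖w(u)‖_p` gives `|c| ≤ τ_p(B)`. Applied to `B^k` and `λᵢ^k` this is the claim.
-/

namespace Matrix

section CommRing

variable {R : Type*} [CommRing R]

lemma charpoly_inv_mul_mul {ι : Type*} [Fintype ι] [DecidableEq ι] {Q : Matrix ι ι R}
    (hQ : IsUnit Q.det) (N : Matrix ι ι R) : (Q⁻¹ * N * Q).charpoly = N.charpoly := by
  rw [mul_assoc, charpoly_mul_comm, mul_assoc, mul_nonsing_inv Q hQ, mul_one]

lemma inv_mul_mul_mulVec_eq_smul {ι : Type*} [Fintype ι] [DecidableEq ι] {Q N : Matrix ι ι R}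
    (hQ : IsUnit Q.det) {x : ι → R} {μ : R} (h : N *ᵥ (Q *ᵥ x) = μ • (Q *ᵥ x)) :
    (Q⁻¹ * N * Q) *ᵥ x = μ • x := by
  rw [← mulVec_mulVec, ← mulVec_mulVec, h, mulVec_smul, mulVec_mulVec, nonsing_inv_mul Q hQ,
    one_mulVec]

lemma vecMul_pow_eq_pow_smul {ι : Type*} [Fintype ι] [DecidableEq ι] {M : Matrix ι ι R}
    {z : ι → R} {ν : R} (h : z ᵥ* M = ν • z) (k : ℕ) : z ᵥ* M ^ k = ν ^ k • z := by
  induction k with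
  | zero => simp
  | succ k ih => rw [pow_succ, ← vecMul_vecMul, ih, smul_vecMul, h, smul_smul, pow_succ]

lemma charpoly_eq_X_sub_C_mul_of_col_zero {m : ℕ} (C : Matrix (Fin (m + 1)) (Fin (m + 1)) R)
    (hC : ∀ i, i ≠ 0 → C i 0 = 0) :
    C.charpoly = (.X - .C (C 0 0)) * (C.submatrix Fin.succ Fin.succ).charpoly := by
  have hsub : C.charmatrix.submatrix Fin.succ Fin.succ =
      (C.submatrix Fin.succ Fin.succ).charmatrix := by
    ext i j : 1
    simp [charmatrix_apply, diagonal_apply]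
  rw [charpoly, det_succ_column_zero, Fin.sum_univ_succ, Finset.sum_eq_zero]
  · simp [charpoly, charmatrix_apply_eq, hsub]
  · intro i _
    simp [hC _ (Fin.succ_ne_zero i)]

end CommRing

section Field

variable {K : Type*} [Field K]

lemma exists_vecMul_eq_smul_of_isRoot_charpoly {ι : Type*} [Fintype ι] [DecidableEq ι]
    (M : Matrix ι ι K) {ν : K} (hν : M.charpoly.IsRoot ν) : ∃ w ≠ 0, w ᵥ* M = ν • w := by
  obtain ⟨w, hw0, hw⟩ := exists_vecMul_eq_zero_iff.2
    (by rwa [← eval_charpoly] : (scalar ι ν - M).det = 0)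
  refine ⟨w, hw0, ?_⟩
  rw [vecMul_sub, sub_eq_zero] at hw
  simpa [scalar_apply, vecMul_smul] using hw.symm

lemma exists_vecMul_eq_smul_head_eq_zero_of_col_zero {m : ℕ}
    (C : Matrix (Fin (m + 1)) (Fin (m + 1)) K) (hC : ∀ i, i ≠ 0 → C i 0 = 0) {ν : K}
    (hν : (C.submatrix Fin.succ Fin.succ).charpoly.IsRoot ν) :
    ∃ ζ ≠ 0, ζ 0 = 0 ∧ ζ ᵥ* C = ν • ζ := by
  obtain ⟨w, hw0, hw⟩ := exists_vecMul_eq_smul_of_isRoot_charpoly _ hν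
  refine ⟨Fin.cons 0 w, fun h => hw0 ?_, rfl, ?_⟩
  · funext j
    simpa using congrFun h j.succ
  · funext j
    refine Fin.cases ?_ (fun j => ?_) j
    · simp [vecMul, dotProduct, Fin.sum_univ_succ, hC _ (Fin.succ_ne_zero _)]
    · simpa [vecMul, dotProduct, Fin.sum_univ_succ] using congrFun hw j

theorem exists_vecMul_eq_smul_sum_eq_zero [DecidableEq K] {n : ℕ} (N : Matrix (Fin n) (Fin n) K)
    {μ ν : K} (hN : N *ᵥ 1 = μ • 1) (hν : ν ∈ N.charpoly.roots.erase μ) :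
    ∃ z ≠ 0, ∑ i, z i = 0 ∧ z ᵥ* N = ν • z := by
  obtain _ | m := n
  · simp at hν
  -- `Q` maps the first basis vector to `1`, so `C = Q⁻¹ N Q` has first column `μ • e₀`.
  set Q : Matrix (Fin (m + 1)) (Fin (m + 1)) K := (1 : Matrix _ _ K).updateCol 0 1
  have hQ : IsUnit Q.det := by
    rw [← cramer_apply, cramer_one]
    exact isUnit_one
  have hQe : Q *ᵥ Pi.single 0 1 = 1 := by
    rw [mulVec_single_one]
    ext i
    simp [Q]
  have hQinv : Q⁻¹ *ᵥ 1 = Pi.single 0 1 := by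
    rw [← hQe, mulVec_mulVec, nonsing_inv_mul Q hQ, one_mulVec]
  set C := Q⁻¹ * N * Q with hCdef
  have hCcol (i) : C i 0 = μ * Pi.single (M := fun _ => K) 0 1 i := by
    have hCe : C *ᵥ Pi.single 0 1 = μ • Pi.single 0 1 :=
      inv_mul_mul_mulVec_eq_smul hQ (by rw [hQe, hN])
    simpa [mulVec_single_one] using congrFun hCe i
  have hC (i) (hi : i ≠ 0) : C i 0 = 0 := by simp [hCcol, hi]
  set M := C.submatrix Fin.succ Fin.succ
  have hroots : N.charpoly.roots = μ ::ₘ M.charpoly.roots := by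
    have hC00 : C 0 0 = μ := by simp [hCcol]
    rw [← charpoly_inv_mul_mul hQ N, charpoly_eq_X_sub_C_mul_of_col_zero C hC, hC00,
      Polynomial.roots_mul ((Polynomial.monic_X_sub_C μ).mul M.charpoly_monic).ne_zero,
      Polynomial.roots_X_sub_C, Multiset.singleton_add]
  rw [hroots, Multiset.erase_cons_head] at hν
  obtain ⟨ζ, hζ0, hζhead, hζ⟩ :=
    exists_vecMul_eq_smul_head_eq_zero_of_col_zero C hC (Polynomial.isRoot_of_mem_roots hν)
  refine ⟨ζ ᵥ* Q⁻¹, fun h => hζ0 ?_, ?_, ?_⟩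
  · rw [← vecMul_one ζ, ← nonsing_inv_mul Q hQ, ← vecMul_vecMul, h, zero_vecMul]
  · rw [← dotProduct_one, ← dotProduct_mulVec, hQinv, dotProduct_single_one, hζhead]
  · have hQN : Q⁻¹ * N = C * Q⁻¹ := by
      rw [hCdef, mul_assoc _ Q, mul_nonsing_inv Q hQ, mul_one]
    rw [vecMul_vecMul, hQN, ← vecMul_vecMul, hζ, smul_vecMul]

end Field

end Matrix

section LpNorm

variable {n : ℕ} {p : ℝ≥0∞}

lemma lpNorm_eq_norm_toLp (x : Fin n → ℝ) : lpNorm p x = ‖WithLp.toLp p x‖ := rfl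

variable [Fact (1 ≤ p)]

lemma lpNorm_smul (t : ℝ) (x : Fin n → ℝ) : lpNorm p (t • x) = |t| * lpNorm p x := by
  simp [lpNorm_eq_norm_toLp, WithLp.toLp_smul, norm_smul]

lemma lpNorm_pos {x : Fin n → ℝ} (hx : x ≠ 0) : 0 < lpNorm p x := by
  rw [lpNorm_eq_norm_toLp]
  exact norm_pos_iff.2 (by simpa using hx)

lemma continuous_lpNorm : Continuous (lpNorm p : (Fin n → ℝ) → ℝ) :=
  (PiLp.continuous_toLp p _).norm

lemma exists_lpNorm_mulVec_le (T : Matrix (Fin n) (Fin n) ℝ) :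
    ∃ C, ∀ x, lpNorm p (T *ᵥ x) ≤ C * lpNorm p x := by
  let f := LinearMap.toContinuousLinearMap (toLpLin p p T)
  exact ⟨‖f‖, fun x => f.le_opNorm (WithLp.toLp p x)⟩

lemma tau_nonneg (T : Matrix (Fin n) (Fin n) ℝ) : 0 ≤ tau p T :=
  Real.sSup_nonneg fun _ ⟨_, _, _, ht⟩ => ht ▸ norm_nonneg _

lemma lpNorm_transpose_mulVec_le_tau (T : Matrix (Fin n) (Fin n) ℝ) {x : Fin n → ℝ}
    (hx : ∑ i, x i = 0) : lpNorm p (Tᵀ *ᵥ x) ≤ tau p T * lpNorm p x := by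
  rcases eq_or_ne x 0 with rfl | hx0
  · simp [lpNorm_eq_norm_toLp]
  have hpos : 0 < lpNorm p x := lpNorm_pos hx0
  obtain ⟨C, hC⟩ := exists_lpNorm_mulVec_le (p := p) Tᵀ
  have hbdd : BddAbove { t : ℝ | ∃ x : Fin n → ℝ, (∑ i, x i) = 0 ∧ lpNorm p x = 1 ∧
      t = lpNorm p (Tᵀ *ᵥ x) } :=
    ⟨C, fun _ ⟨y, _, hy, ht⟩ => ht ▸ (hC y).trans_eq (by rw [hy, mul_one])⟩
  have hle := le_csSup hbdd ⟨(lpNorm p x)⁻¹ • x, by simp [← Finset.mul_sum, hx],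
    by rw [lpNorm_smul, abs_inv, abs_of_pos hpos, inv_mul_cancel₀ hpos.ne'], rfl⟩
  rw [mulVec_smul, lpNorm_smul, abs_inv, abs_of_pos hpos, inv_mul_le_iff₀ hpos] at hle
  exact hle.trans_eq (mul_comm _ _)

lemma re_vecMul_map_ofReal (z : Fin n → ℂ) (T : Matrix (Fin n) (Fin n) ℝ) :
    (fun j => (z ᵥ* T.map Complex.ofRealHom) j |>.re) = (fun j => (z j).re) ᵥ* T := by
  ext j
  simp [vecMul, dotProduct, Complex.re_sum]

theorem norm_le_tau_of_vecMul_eq_smul (T : Matrix (Fin n) (Fin n) ℝ) {c : ℂ} {z : Fin n → ℂ}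
    (hz : z ≠ 0) (hsum : ∑ i, z i = 0) (hc : z ᵥ* T.map Complex.ofRealHom = c • z) :
    ‖c‖ ≤ tau p T := by
  let w (u : Circle) : Fin n → ℝ := fun j => ((u : ℂ) • z) j |>.re
  have hw_sum (u : Circle) : ∑ j, w u j = 0 := by
    simp only [w, Pi.smul_apply, smul_eq_mul]
    rw [← Complex.re_sum, ← Finset.mul_sum, hsum, mul_zero, Complex.zero_re]
  have hw_rot (u : Circle) : Tᵀ *ᵥ w u = ‖c‖ • w (u * Circle.exp (Complex.arg c)) := by
    have hrot : ((u : ℂ) • z) ᵥ* T.map Complex.ofRealHom =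
        (‖c‖ : ℂ) • ((u * Circle.exp (Complex.arg c) : Circle) : ℂ) • z := by
      rw [smul_vecMul, hc, smul_smul, smul_smul, Circle.coe_mul, Circle.coe_exp]
      congr 1
      linear_combination -(u : ℂ) * Complex.norm_mul_exp_arg_mul_I c
    rw [mulVec_transpose, ← re_vecMul_map_ofReal, hrot]
    ext j
    simp [w]
  obtain ⟨u₀, -, hu₀⟩ := isCompact_univ.exists_isMaxOn Set.univ_nonempty
    ((continuous_lpNorm (p := p)).comp (by fun_prop : Continuous w)).continuousOn
  have hpos : 0 < lpNorm p (w u₀) := by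
    obtain ⟨j, hj⟩ := Function.ne_iff.1 hz
    refine (lpNorm_pos (p := p) fun h => hj ?_).trans_le
      (hu₀ (Set.mem_univ (Circle.exp (-Complex.arg (z j)))))
    have hunrot : (Circle.exp (-Complex.arg (z j)) : ℂ) * z j = ‖z j‖ := by
      conv_lhs => rw [← Complex.norm_mul_exp_arg_mul_I (z j)]
      rw [Circle.coe_exp, mul_left_comm, ← Complex.exp_add]
      simp
    have := congrFun h j
    simp only [w, Pi.smul_apply, smul_eq_mul, hunrot, Complex.ofReal_re, Pi.zero_apply] at this
    exact norm_eq_zero.1 this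
  set u₁ := u₀ * (Circle.exp (Complex.arg c))⁻¹
  refine le_of_mul_le_mul_right ?_ hpos
  calc ‖c‖ * lpNorm p (w u₀) = lpNorm p (Tᵀ *ᵥ w u₁) := by
        rw [hw_rot, inv_mul_cancel_right, lpNorm_smul, abs_norm]
    _ ≤ tau p T * lpNorm p (w u₁) := lpNorm_transpose_mulVec_le_tau T (hw_sum u₁)
    _ ≤ tau p T * lpNorm p (w u₀) := mul_le_mul_of_nonneg_left (hu₀ trivial) (tau_nonneg T)

theorem norm_le_tau_pow_rpow_of_vecMul_eq_smul (T : Matrix (Fin n) (Fin n) ℝ) {c : ℂ}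
    {z : Fin n → ℂ} (hz : z ≠ 0) (hsum : ∑ i, z i = 0)
    (hc : z ᵥ* T.map Complex.ofRealHom = c • z) {k : ℕ} (hk : 0 < k) :
    ‖c‖ ≤ tau p (T ^ k) ^ ((1 : ℝ) / k) := by
  have hck : z ᵥ* (T ^ k).map Complex.ofRealHom = c ^ k • z := by
    rw [Matrix.map_pow]
    exact vecMul_pow_eq_pow_smul hc k
  have hnorm := norm_le_tau_of_vecMul_eq_smul (p := p) (T ^ k) hz hsum hck
  rw [norm_pow, ← Real.rpow_natCast] at hnorm
  rwa [one_div, Real.le_rpow_inv_iff_of_pos (norm_nonneg _) (tau_nonneg _) (by positivity)]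

end LpNorm

lemma RingHom.map_mulVec_one_eq_smul {R S : Type*} [Semiring R] [Semiring S] (f : R →+* S)
    {ι : Type*} [Fintype ι] {M : Matrix ι ι R} {μ : R} (h : M *ᵥ 1 = μ • 1) :
    M.map f *ᵥ 1 = f μ • 1 := by
  ext j
  simpa using (f.map_mulVec M 1 j).symm.trans (congrArg f (congrFun h j))

theorem stmt13_general {n : ℕ} (hn : 0 < n) (A : Matrix (Fin n) (Fin n) ℝ)
    (lam : Fin n → ℂ)
    (hroots : ((A.map ((↑) : ℝ → ℂ)).charpoly).roots = Finset.univ.val.map lam)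
    (lam1 : ℝ) (hlam1 : lam ⟨0, hn⟩ = (lam1 : ℂ))
    (v : Fin n → ℝ) (hv : ∀ i, v i ≠ 0) (hAv : A *ᵥ v = lam1 • v)
    (D B : Matrix (Fin n) (Fin n) ℝ) (hD : D = Matrix.diagonal v) (hB : B = D⁻¹ * A * D)
    (p : ℝ≥0∞) (hp : 1 ≤ p)
    (i : Fin n) (hi : i ≠ ⟨0, hn⟩) (k : ℕ) (hk : 0 < k) :
    ‖lam i‖ ≤ (tau p (B ^ k)) ^ ((1 : ℝ) / k) := by
  have : Fact (1 ≤ p) := ⟨hp⟩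
  have hDdet : IsUnit D.det := by
    rw [hD, det_diagonal]
    exact (Finset.prod_ne_zero_iff.2 fun i _ => hv i).isUnit
  have hBe : B *ᵥ 1 = lam1 • 1 := by
    have hDe : D *ᵥ 1 = v := by ext; simp [hD, mulVec_diagonal]
    rw [hB]
    exact inv_mul_mul_mulVec_eq_smul hDdet (by rw [hDe, hAv])
  have hmem : lam i ∈ (B.map Complex.ofRealHom).charpoly.roots.erase (lam1 : ℂ) := by
    rw [charpoly_map, hB, charpoly_inv_mul_mul hDdet, ← charpoly_map]
    rw [show (A.map Complex.ofRealHom).charpoly.roots = _ from hroots, ← hlam1,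
      ← Multiset.map_erase_of_mem _ _ (Finset.mem_univ_val _)]
    exact Multiset.mem_map_of_mem _ ((Multiset.mem_erase_of_ne hi).2 (Finset.mem_univ_val _))
  obtain ⟨z, hz0, hzsum, hz⟩ :=
    exists_vecMul_eq_smul_sum_eq_zero _ (Complex.ofRealHom.map_mulVec_one_eq_smul hBe) hmem
  exact norm_le_tau_pow_rpow_of_vecMul_eq_smul B hz0 hzsum hz hk

/-- Corollary 3: with `B = D⁻¹ A D`, `D = diag v`, every eigenvalue
`λ_i` (`i ≥ 2`) of `A` satisfies `|λ_i| ≤ (τ_p(B^k))^{1/k}` for every admissible `p`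
and every positive integer `k`. -/
theorem stmt13 {n : ℕ} (hn : 0 < n) (A : Matrix (Fin n) (Fin n) ℝ)
    (lam : Fin n → ℂ)
    (hroots : ((A.map ((↑) : ℝ → ℂ)).charpoly).roots = Finset.univ.val.map lam)
    (lam1 : ℝ) (hlam1 : lam ⟨0, hn⟩ = (lam1 : ℂ))
    (v : Fin n → ℝ) (hv : ∀ i, v i ≠ 0) (hAv : A *ᵥ v = lam1 • v)
    (D B : Matrix (Fin n) (Fin n) ℝ) (hD : D = Matrix.diagonal v) (hB : B = D⁻¹ * A * D)
    (p : ℝ≥0∞) (hp : 1 ≤ p) (hp' : p = ⊤ ∨ ∃ m : ℕ, p = m)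
    (i : Fin n) (hi : i ≠ ⟨0, hn⟩) (k : ℕ) (hk : 0 < k) :
    ‖lam i‖ ≤ (tau p (B ^ k)) ^ ((1 : ℝ) / k) :=
  stmt13_general hn A lam hroots lam1 hlam1 v hv hAv D B hD hB p hp i hi k hk
end

section
/- Let B be an n×n real constant row-sum matrix. Then τ_∞(B) = ρ̂(B). -/
open Matrix
open scoped ENNReal

/-!
For a column `c` of `B` and any `x` with `∑ xᵢ = 0` and `‖x‖_∞ ≤ 1`, one has
`∑ cᵢ xᵢ = ∑ (cᵢ - m) xᵢ ≤ ∑ |cᵢ - m|` for every constant `m`. Taking for `m` a median of `c`,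
equality holds for the vector `x` equal to `-1` on the smaller half of the entries, `1` on the
larger half and `0` at the middle entry, and `∑ |cᵢ - m|` is exactly `cs_j`: the larger half
enters with sign `+`, the smaller with sign `-`, and the `m`'s cancel. Since
`‖Bᵀ x‖_∞ = maxⱼ |∑ᵢ bᵢⱼ xᵢ|`, this gives `τ_∞(B) = maxⱼ cs_j(B)`; for `n = 1` both sides vanish.
-/

section

variable {n : ℕ}

lemma List.reverse_ofFn {α : Type*} (f : Fin n → α) :
    (List.ofFn f).reverse = List.ofFn (f ∘ Fin.rev) := by
  apply List.ext_getElem (by simp)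
  intro i _ _
  simp only [List.getElem_reverse, List.getElem_ofFn, List.length_ofFn, Function.comp_apply,
    Fin.rev]
  congr 2
  omega

lemma sortDesc_ofFn (c : Fin n → ℝ) :
    sortDesc (List.ofFn c) = List.ofFn (c ∘ Tuple.sort c ∘ Fin.rev) := by
  rw [← Function.comp_assoc, ← List.reverse_ofFn, sortDesc]
  congr 1
  refine List.Perm.eq_of_pairwise' (List.pairwise_insertionSort _ _)
    (Tuple.monotone_sort c).sortedLE_ofFn.pairwise ?_
  exact (List.perm_insertionSort _ _).trans ((Tuple.sort c).ofFn_comp_perm c).symm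

lemma halfSumDiff_eq_sum_take (n : ℕ) (l : List ℝ) :
    halfSumDiff n l = (l.take (n / 2)).sum + (l.take (n - n / 2)).sum - l.sum := by
  have hdrop (k : ℕ) : (l.drop k).sum = l.sum - (l.take k).sum := by
    rw [← List.sum_take_add_sum_drop l k]; ring
  rcases Nat.even_or_odd n with he | ho
  · have := Nat.even_iff.mp he
    rw [halfSumDiff, if_neg (by omega), hdrop, show n - n / 2 = n / 2 by omega]
    ring
  · have := Nat.odd_iff.mp ho
    rw [halfSumDiff, if_pos this, hdrop, show (n - 1) / 2 = n / 2 by omega,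
      show (n + 1) / 2 = n - n / 2 by omega]
    ring

def halfSign (n : ℕ) (k : Fin n) : ℝ :=
  if (k : ℕ) < n / 2 then -1 else if n - n / 2 ≤ (k : ℕ) then 1 else 0

lemma abs_halfSign_le_one (k : Fin n) : |halfSign n k| ≤ 1 := by
  unfold halfSign; split_ifs <;> norm_num

lemma halfSign_rev (k : Fin n) : halfSign n k.rev = -halfSign n k := by
  have := k.isLt
  unfold halfSign; simp only [Fin.val_rev]; split_ifs <;> first | (exfalso; omega) | norm_num

lemma sum_halfSign (n : ℕ) : ∑ k, halfSign n k = 0 := by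
  have h := Fintype.sum_equiv Fin.revPerm (fun k => halfSign n k.rev) (halfSign n) (by simp)
  simp only [halfSign_rev, Finset.sum_neg_distrib] at h
  linarith

lemma halfSign_of_le_one (hn : n ≤ 1) (k : Fin n) : halfSign n k = 0 := by
  have := k.isLt
  unfold halfSign; split_ifs <;> first | rfl | omega

lemma halfSign_zero (hn : 1 < n) : halfSign n ⟨0, by omega⟩ = -1 := by
  unfold halfSign; rw [if_pos (by simp; omega)]

lemma mul_halfSign (b : Fin n → ℝ) (k : Fin n) :
    b k * halfSign n k =
      b k - (if (k : ℕ) < n - n / 2 then b k else 0) - (if (k : ℕ) < n / 2 then b k else 0) := by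
  unfold halfSign; split_ifs <;> first | (exfalso; omega) | ring

lemma halfSumDiff_ofFn (b : Fin n → ℝ) :
    halfSumDiff n (List.ofFn b) = -∑ k, b k * halfSign n k := by
  simp only [halfSumDiff_eq_sum_take, List.sum_take_ofFn, List.sum_ofFn, mul_halfSign,
    Finset.sum_sub_distrib, Finset.sum_ite, Finset.sum_const_zero, add_zero]
  ring

lemma sub_mul_halfSign_eq_abs {a : Fin n → ℝ} (ha : Monotone a) (mid : Fin n)
    (hmid : (mid : ℕ) = n / 2) (k : Fin n) :
    (a k - a mid) * halfSign n k = |a k - a mid| := by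
  unfold halfSign
  split_ifs with hlo hhi
  · rw [abs_of_nonpos (sub_nonpos.mpr (ha (by rw [Fin.le_def]; omega)))]; ring
  · rw [abs_of_nonneg (sub_nonneg.mpr (ha (by rw [Fin.le_def]; omega)))]; ring
  · rw [show k = mid by ext; omega]; simp

-- `halfSign` of the rank of `i` among the entries of `c`: `-1` on the smaller half of the
-- entries, `1` on the larger half.
noncomputable def rankSign (c : Fin n → ℝ) (i : Fin n) : ℝ :=
  halfSign n ((Tuple.sort c).symm i)

lemma sum_rankSign (c : Fin n → ℝ) : ∑ i, rankSign c i = 0 := by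
  rw [← sum_halfSign n]
  exact Equiv.sum_comp (Tuple.sort c).symm (halfSign n)

lemma rankSign_of_le_one (hn : n ≤ 1) (c : Fin n → ℝ) : rankSign c = 0 := by
  ext i
  exact halfSign_of_le_one hn _

lemma norm_rankSign (hn : 1 < n) (c : Fin n → ℝ) : ‖rankSign c‖ = 1 := by
  refine le_antisymm ((pi_norm_le_iff_of_nonneg zero_le_one).2 fun i => ?_) ?_
  · exact abs_halfSign_le_one _
  · have h := norm_le_pi_norm (rankSign c) (Tuple.sort c ⟨0, by omega⟩)
    rwa [rankSign, Equiv.symm_apply_apply, halfSign_zero hn, norm_neg, norm_one] at h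

lemma halfSumDiff_sortDesc_ofFn (c : Fin n → ℝ) :
    halfSumDiff n (sortDesc (List.ofFn c)) = ∑ i, c i * rankSign c i := by
  calc halfSumDiff n (sortDesc (List.ofFn c))
      = ∑ k, c (Tuple.sort c k.rev) * halfSign n k.rev := by
        simp [sortDesc_ofFn, halfSumDiff_ofFn, halfSign_rev]
    _ = ∑ k, c (Tuple.sort c k) * halfSign n k :=
        Fintype.sum_equiv Fin.revPerm _ _ fun _ => rfl
    _ = ∑ i, c i * rankSign c i := by
        rw [← Equiv.sum_comp (Tuple.sort c) (fun i => c i * rankSign c i)]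
        simp [rankSign]

lemma sum_sub_const_mul_of_sum_eq_zero {ι : Type*} [Fintype ι] {x : ι → ℝ}
    (hx : ∑ i, x i = 0) (c : ι → ℝ) (m : ℝ) : ∑ i, (c i - m) * x i = ∑ i, c i * x i := by
  simp [sub_mul, Finset.sum_sub_distrib, ← Finset.mul_sum, hx]

lemma sum_abs_sub_median (c : Fin n → ℝ) (mid : Fin n) (hmid : (mid : ℕ) = n / 2) :
    ∑ i, |c i - c (Tuple.sort c mid)| = ∑ i, c i * rankSign c i := by
  set σ := Tuple.sort c
  rw [← sum_sub_const_mul_of_sum_eq_zero (sum_rankSign c) c (c (σ mid)),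
    ← Equiv.sum_comp σ (fun i => |c i - c (σ mid)|),
    ← Equiv.sum_comp σ (fun i => (c i - c (σ mid)) * rankSign c i)]
  refine Finset.sum_congr rfl fun k _ => ?_
  rw [rankSign, Equiv.symm_apply_apply]
  exact (sub_mul_halfSign_eq_abs (Tuple.monotone_sort c) mid hmid k).symm

lemma abs_sum_mul_le_halfSumDiff (c : Fin n → ℝ) {x : Fin n → ℝ} (hx0 : ∑ i, x i = 0)
    (hx1 : ‖x‖ ≤ 1) : |∑ i, c i * x i| ≤ halfSumDiff n (sortDesc (List.ofFn c)) := by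
  rcases Nat.eq_zero_or_pos n with rfl | hn
  · simp [halfSumDiff, sortDesc]
  set m := c (Tuple.sort c ⟨n / 2, by omega⟩)
  calc |∑ i, c i * x i| = |∑ i, (c i - m) * x i| := by
        rw [sum_sub_const_mul_of_sum_eq_zero hx0]
    _ ≤ ∑ i, |c i - m| := by
        refine (Finset.abs_sum_le_sum_abs _ _).trans (Finset.sum_le_sum fun i _ => ?_)
        rw [abs_mul]
        exact mul_le_of_le_one_right (abs_nonneg _) ((norm_le_pi_norm x i).trans hx1)
    _ = halfSumDiff n (sortDesc (List.ofFn c)) := by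
        rw [sum_abs_sub_median c _ rfl, halfSumDiff_sortDesc_ofFn]

lemma lpNorm_top (y : Fin n → ℝ) : lpNorm ⊤ y = ‖y‖ :=
  PiLp.norm_toLp y

lemma mulVec_transpose_apply (B : Matrix (Fin n) (Fin n) ℝ) (x : Fin n → ℝ) (j : Fin n) :
    (Bᵀ *ᵥ x) j = ∑ i, B i j * x i := by
  simp [Matrix.mulVec_transpose, Matrix.vecMul, dotProduct, mul_comm]

lemma csCol_eq_mulVec_transpose_rankSign (B : Matrix (Fin n) (Fin n) ℝ) (j : Fin n) :
    csCol B j = (Bᵀ *ᵥ rankSign fun i => B i j) j := by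
  rw [mulVec_transpose_apply, csCol, halfSumDiff_sortDesc_ofFn]

lemma abs_mulVec_transpose_apply_le_csCol (B : Matrix (Fin n) (Fin n) ℝ)
    {x : Fin n → ℝ} (hx0 : ∑ i, x i = 0) (hx1 : ‖x‖ ≤ 1) (j : Fin n) :
    |(Bᵀ *ᵥ x) j| ≤ csCol B j := by
  rw [mulVec_transpose_apply]
  exact abs_sum_mul_le_halfSumDiff _ hx0 hx1

lemma csCol_nonneg (B : Matrix (Fin n) (Fin n) ℝ) (j : Fin n) : 0 ≤ csCol B j :=
  (abs_nonneg _).trans (abs_mulVec_transpose_apply_le_csCol B (x := 0) (by simp) (by simp) j)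

end

theorem stmt18_general {n : ℕ} (hn : 0 < n) (B : Matrix (Fin n) (Fin n) ℝ) :
    tau ⊤ B =
      Finset.univ.sup' ⟨(⟨0, hn⟩ : Fin n), Finset.mem_univ _⟩ (fun j => csCol B j) := by
  obtain ⟨j, -, hj⟩ := Finset.exists_mem_eq_sup' ⟨(⟨0, hn⟩ : Fin n), Finset.mem_univ _⟩
    (fun j => csCol B j)
  set M := Finset.univ.sup' ⟨(⟨0, hn⟩ : Fin n), Finset.mem_univ _⟩ (fun j => csCol B j)
  have hM0 : 0 ≤ M := hj ▸ csCol_nonneg B j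
  have hub : ∀ t ∈ {t : ℝ | ∃ x : Fin n → ℝ, (∑ i, x i) = 0 ∧ lpNorm ⊤ x = 1 ∧
      t = lpNorm ⊤ (Bᵀ *ᵥ x)}, t ≤ M := by
    rintro _ ⟨x, hx0, hx1, rfl⟩
    rw [lpNorm_top] at hx1 ⊢
    exact (pi_norm_le_iff_of_nonneg hM0).2 fun j =>
      (abs_mulVec_transpose_apply_le_csCol B hx0 hx1.le j).trans
        (Finset.le_sup' _ (Finset.mem_univ j))
  refine le_antisymm (Real.sSup_le hub hM0) ?_
  rcases le_or_gt n 1 with h1 | h1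
  · have hM : M = 0 := by
      rw [hj, csCol_eq_mulVec_transpose_rankSign, rankSign_of_le_one h1, mulVec_zero]; rfl
    exact hM ▸ Real.sSup_nonneg (by rintro _ ⟨x, -, -, rfl⟩; exact norm_nonneg _)
  · refine le_trans ?_ (le_csSup ⟨M, hub⟩ ⟨rankSign fun i => B i j, sum_rankSign _,
      by rw [lpNorm_top, norm_rankSign h1], rfl⟩)
    rw [hj, csCol_eq_mulVec_transpose_rankSign, lpNorm_top]
    exact (Real.le_norm_self _).trans (norm_le_pi_norm _ j)

/-- `τ_∞(B) = ρ̂(B)` for a constant row-sum matrix `B`, where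
`ρ̂(B) = max_j cs_j(B)`. -/
theorem stmt18 {n : ℕ} (hn : 0 < n) (B : Matrix (Fin n) (Fin n) ℝ)
    (lamt : ℝ) (hB : B *ᵥ (1 : Fin n → ℝ) = lamt • (1 : Fin n → ℝ)) :
    tau ⊤ B =
      Finset.univ.sup' ⟨(⟨0, hn⟩ : Fin n), Finset.mem_univ _⟩ (fun j => csCol B j) :=
  stmt18_general hn B
end
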